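/- Equivalence of sequent and natural deduction presentations of Elementary Affine Logic: Γ ⊢_EAL A is derivable in the sequent calculus if and only if Γ ⊢_NEAL A is derivable in natural deduction. -/
import Mathlib



/-- Formulas of Elementary Affine Logic: atoms, bang, linear implication. -/
inductive EALFormula where
  | atom (n : ℕ)
  | bang (A : EALFormula)
  | limp (A B : EALFormula)
deriving DecidableEq

/-- Simple types (with type variables). -/
inductive SimpleType where
  | tvar (n : ℕ)
  | arrow (a b : SimpleType)
deriving DecidableEq

/-- `!^k A`. -/
def bangN : ℕ → EALFormula → EALFormula
  | 0, A => A
  | k + 1, A => .bang (bangN k A)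

/-- Erasure of an EAL formula to a simple type. -/
def eraseF : EALFormula → SimpleType
  | .atom n => .tvar n
  | .bang A => eraseF A
  | .limp A B => .arrow (eraseF A) (eraseF B)

/-- Pure lambda terms with named (natural-number) variables. -/
inductive Lam where
  | var (x : ℕ)
  | lam (x : ℕ) (M : Lam)
  | app (M N : Lam)
deriving DecidableEq

/-- Naive substitution `M{N/x}` on pure lambda terms. -/
def Lam.subst : Lam → ℕ → Lam → Lam
  | .var y, x, N => if y = x then N else .var y
  | .lam y M, x, N => if y = x then .lam y M else .lam y (M.subst x N)
  | .app M P, x, N => .app (M.subst x N) (P.subst x N)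

/-- Iterated substitution. -/
def Lam.substList : Lam → List (ℕ × Lam) → Lam
  | M, [] => M
  | M, (x, N) :: rest => (M.subst x N).substList rest

/-- Simply typed lambda calculus. -/
inductive SimplyTyped : List (ℕ × SimpleType) → Lam → SimpleType → Prop where
  | var {Γ x σ} : (x, σ) ∈ Γ → SimplyTyped Γ (.var x) σ
  | lam {Γ x σ τ M} : SimplyTyped ((x, σ) :: Γ) M τ →
      SimplyTyped Γ (.lam x M) (.arrow σ τ)
  | app {Γ M N σ τ} : SimplyTyped Γ M (.arrow σ τ) → SimplyTyped Γ N σ →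
      SimplyTyped Γ (.app M N) τ

/-- The EAL sequent calculus with lambda-term annotations. -/
inductive EALDeriv : List (ℕ × EALFormula) → Lam → EALFormula → Prop where
  | ax {x A} : EALDeriv [(x, A)] (.var x) A
  | cut {Γ Δ x A B M N} : EALDeriv Γ N A → EALDeriv ((x, A) :: Δ) M B →
      EALDeriv (Γ ++ Δ) (M.subst x N) B
  | weak {Γ x A M B} : EALDeriv Γ M B → EALDeriv ((x, A) :: Γ) M B
  | contr {Γ x₁ x₂ z A M B} :
      EALDeriv ((x₁, .bang A) :: (x₂, .bang A) :: Γ) M B →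
      EALDeriv ((z, .bang A) :: Γ) ((M.subst x₁ (.var z)).subst x₂ (.var z)) B
  | limpR {Γ x A M B} : EALDeriv ((x, A) :: Γ) M B → EALDeriv Γ (.lam x M) (.limp A B)
  | limpL {Γ Δ f x A B C M N} : EALDeriv Γ N A → EALDeriv ((x, B) :: Δ) M C →
      EALDeriv ((f, .limp A B) :: (Γ ++ Δ)) (M.subst x (.app (.var f) N)) C
  | promote {Γ M B} : EALDeriv Γ M B →
      EALDeriv (Γ.map fun p => (p.1, .bang p.2)) M (.bang B)


/-- Elementary affine terms: variables, abstraction, application,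
promotion `!(M)[M₁/x₁,…,Mₙ/xₙ]` and contraction `[M]N = x,y`. -/
inductive ETerm where
  | var (x : ℕ)
  | lam (x : ℕ) (M : ETerm)
  | app (M N : ETerm)
  | promote (M : ETerm) (Ms : List ETerm) (xs : List ℕ)
  | contr (M N : ETerm) (x y : ℕ)

/-- Free variables of an elementary affine term. -/
def FV : ETerm → Finset ℕ
  | .var x => {x}
  | .lam x M => FV M \ {x}
  | .app M N => FV M ∪ FV N
  | .promote M Ms xs =>
      (Ms.attach.foldr (fun m s => FV m.1 ∪ s) ∅) ∪ (FV M \ xs.toFinset)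
  | .contr M N x y => (FV M \ {x, y}) ∪ FV N
decreasing_by
  all_goals simp_wf
  all_goals try omega
  all_goals (have := List.sizeOf_lt_of_mem m.2; omega)

/-- Number of free occurrences of `x` in an elementary affine term. -/
def occE (x : ℕ) : ETerm → ℕ
  | .var y => if y = x then 1 else 0
  | .lam y M => if y = x then 0 else occE x M
  | .app M N => occE x M + occE x N
  | .promote M Ms xs =>
      (Ms.attach.map fun m => occE x m.1).sum + (if x ∈ xs then 0 else occE x M)
  | .contr M N y z => (if x = y ∨ x = z then 0 else occE x M) + occE x N
decreasing_by
  all_goals simp_wf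
  all_goals try omega
  all_goals (have := List.sizeOf_lt_of_mem m.2; omega)

/-- Legal elementary affine terms (linearity conditions). -/
inductive Legal : ETerm → Prop where
  | var {x} : Legal (.var x)
  | lam {x M} : Legal M → Legal (.lam x M)
  | app {M N} : Legal M → Legal N → Disjoint (FV M) (FV N) → Legal (.app M N)
  | promote {M Ms xs} : Legal M → (∀ P ∈ Ms, Legal P) →
      FV M = xs.toFinset →
      (Ms.Pairwise fun P Q => Disjoint (FV P) (FV Q)) →
      Legal (.promote M Ms xs)
  | contr {M N x y} : Legal M → Legal N → Disjoint (FV M) (FV N) →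
      Legal (.contr M N x y)


/-- Substitution `M{N/x}` on elementary affine terms. -/
def substE (x : ℕ) (N : ETerm) : ETerm → ETerm
  | .var y => if y = x then N else .var y
  | .lam y M => if y = x then .lam y M else .lam y (substE x N M)
  | .app M P => .app (substE x N M) (substE x N P)
  | .promote M Ms xs =>
      if x ∈ xs then .promote M (Ms.attach.map fun m => substE x N m.1) xs
      else .promote (substE x N M) (Ms.attach.map fun m => substE x N m.1) xs
  | .contr M P y z =>
      if x = y ∨ x = z then .contr M (substE x N P) y z
      else .contr (substE x N M) (substE x N P) y z
decreasing_by
  all_goals simp_wf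
  all_goals try omega
  all_goals (have := List.sizeOf_lt_of_mem m.2; omega)


/-- Erasure of an elementary affine term to a pure lambda term. -/
def eraseT : ETerm → Lam
  | .var x => .var x
  | .lam x M => .lam x (eraseT M)
  | .app M N => .app (eraseT M) (eraseT N)
  | .promote M Ms xs =>
      (eraseT M).substList (xs.zip (Ms.attach.map fun m => eraseT m.1))
  | .contr M N x y => ((eraseT M).subst x (eraseT N)).subst y (eraseT N)
decreasing_by
  all_goals simp_wf
  all_goals try omega
  all_goals (have := List.sizeOf_lt_of_mem m.2; omega)

/-- The length measure on elementary affine terms. -/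
def Lterm : ETerm → ℕ
  | .var _ => 0
  | .lam _ M => 1 + Lterm M
  | .app M N => 1 + Lterm M + Lterm N
  | .promote M Ms _ => Lterm M + (Ms.attach.map fun m => Lterm m.1).sum
  | .contr M N _ _ => Lterm M + Lterm N
decreasing_by
  all_goals simp_wf
  all_goals try omega
  all_goals (have := List.sizeOf_lt_of_mem m.2; omega)

/-- The length measure on pure lambda terms. -/
def Llam : Lam → ℕ
  | .var _ => 0
  | .lam _ M => 1 + Llam M
  | .app M N => 1 + Llam M + Llam N


/-- Fold a list of contractions around a term:
`contrFold R [(P₁,a₁,b₁),…]` is `[…[R]P₁=a₁,b₁ …]`. -/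
def contrFold : ETerm → List (ETerm × ℕ × ℕ) → ETerm
  | R, [] => R
  | R, (P, a, b) :: rest => contrFold (.contr R P a b) rest

/-- Names of the reduction rules of NEAL. -/
inductive RuleName where
  | beta | dup | bangbang | appc | bangc | cc | lamc
deriving DecidableEq

/-- One-step reduction on elementary affine terms, labelled by the rule used,
and closed under all term contexts. -/
inductive Step : RuleName → ETerm → ETerm → Prop where
  | beta {x M N} : Step .beta (.app (.lam x M) N) (substE x N M)
  | dup {N M : ETerm} {Ms : List ETerm} {xs xs' ys' : List ℕ} {x y : ℕ}
      (h1 : xs'.length = Ms.length) (h2 : ys'.length = Ms.length)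
      (hnd : (xs' ++ ys').Nodup)
      (hfresh : ∀ a ∈ xs' ++ ys', a ∉ FV N ∪ FV (.promote M Ms xs)) :
      Step .dup (.contr N (.promote M Ms xs) x y)
        (contrFold
          (substE y (.promote M (ys'.map ETerm.var) xs)
            (substE x (.promote M (xs'.map ETerm.var) xs) N))
          (Ms.zip (xs'.zip ys')))
  | bangbang {M N : ETerm} {Ms₁ Ms₂ Ps : List ETerm} {xs₁ xs₂ ys : List ℕ} {xi : ℕ}
      (hlen : xs₁.length = Ms₁.length) :
      Step .bangbang
        (.promote M (Ms₁ ++ .promote N Ps ys :: Ms₂) (xs₁ ++ xi :: xs₂))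
        (.promote (substE xi N M) (Ms₁ ++ Ps ++ Ms₂) (xs₁ ++ ys ++ xs₂))
  | appcL {M M₁ N : ETerm} {x₁ x₂ x₁' x₂' : ℕ}
      (hf₁ : x₁' ∉ FV M ∪ FV N) (hf₂ : x₂' ∉ FV M ∪ FV N) (hne : x₁' ≠ x₂') :
      Step .appc (.app (.contr M M₁ x₁ x₂) N)
        (.contr (.app (substE x₂ (.var x₂') (substE x₁ (.var x₁') M)) N) M₁ x₁' x₂')
  | appcR {M N N₁ : ETerm} {x₁ x₂ x₁' x₂' : ℕ}
      (hf₁ : x₁' ∉ FV M ∪ FV N) (hf₂ : x₂' ∉ FV M ∪ FV N) (hne : x₁' ≠ x₂') :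
      Step .appc (.app M (.contr N N₁ x₁ x₂))
        (.contr (.app M (substE x₂ (.var x₂') (substE x₁ (.var x₁') N))) N₁ x₁' x₂')
  | bangc {M N P : ETerm} {Ms₁ Ms₂ : List ETerm} {xs : List ℕ} {y z y' z' : ℕ}
      (hf₁ : y' ∉ FV (ETerm.promote M (Ms₁ ++ P :: Ms₂) xs))
      (hf₂ : z' ∉ FV (ETerm.promote M (Ms₁ ++ P :: Ms₂) xs)) (hne : y' ≠ z') :
      Step .bangc (.promote M (Ms₁ ++ .contr P N y z :: Ms₂) xs)
        (.contr (.promote M (Ms₁ ++ (substE z (.var z') (substE y (.var y') P)) :: Ms₂) xs)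
          N y' z')
  | cc {M N P : ETerm} {x₁ x₂ y₁ y₂ y₁' y₂' : ℕ}
      (hf₁ : y₁' ∉ FV M ∪ FV N) (hf₂ : y₂' ∉ FV M ∪ FV N) (hne : y₁' ≠ y₂') :
      Step .cc (.contr M (.contr N P y₁ y₂) x₁ x₂)
        (.contr (.contr M (substE y₂ (.var y₂') (substE y₁ (.var y₁') N)) x₁ x₂) P y₁' y₂')
  | lamc {M N : ETerm} {x y z : ℕ} (h : x ∉ FV N) :
      Step .lamc (.lam x (.contr M N y z)) (.contr (.lam x M) N y z)
  | lamCong {r x M M'} : Step r M M' → Step r (.lam x M) (.lam x M')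
  | appCongL {r M M' N} : Step r M M' → Step r (.app M N) (.app M' N)
  | appCongR {r M N N'} : Step r N N' → Step r (.app M N) (.app M N')
  | promoteCongBody {r M M' Ms xs} : Step r M M' →
      Step r (.promote M Ms xs) (.promote M' Ms xs)
  | promoteCongArg {r M P P' Ms₁ Ms₂ xs} : Step r P P' →
      Step r (.promote M (Ms₁ ++ P :: Ms₂) xs) (.promote M (Ms₁ ++ P' :: Ms₂) xs)
  | contrCongL {r M M' N x y} : Step r M M' → Step r (.contr M N x y) (.contr M' N x y)
  | contrCongR {r M N N' x y} : Step r N N' → Step r (.contr M N x y) (.contr M N' x y)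

/-- The reduction relation `⇝`: reflexive-transitive closure of all the rules. -/
def Red : ETerm → ETerm → Prop :=
  Relation.ReflTransGen fun M N => ∃ r, Step r M N

/-- The subterm relation on elementary affine terms. -/
inductive Subterm : ETerm → ETerm → Prop where
  | refl (M) : Subterm M M
  | lam {S M x} : Subterm S M → Subterm S (.lam x M)
  | appL {S M N} : Subterm S M → Subterm S (.app M N)
  | appR {S M N} : Subterm S N → Subterm S (.app M N)
  | promoteBody {S M Ms xs} : Subterm S M → Subterm S (.promote M Ms xs)
  | promoteArg {S M P Ms xs} : P ∈ Ms → Subterm S P → Subterm S (.promote M Ms xs)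
  | contrL {S M N x y} : Subterm S M → Subterm S (.contr M N x y)
  | contrR {S M N x y} : Subterm S N → Subterm S (.contr M N x y)

/-- Domain of a basis. -/
def dom (Γ : List (ℕ × EALFormula)) : List ℕ := Γ.map Prod.fst

/-- The NEAL term assignment system (natural deduction for EAL). -/
inductive NEALT : List (ℕ × EALFormula) → ETerm → EALFormula → Prop where
  | ax {Γ x A} : (x, A) ∈ Γ → NEALT Γ (.var x) A
  | contr {Γ Δ M N x y A B} :
      NEALT Γ M (.bang A) →
      NEALT ((x, .bang A) :: (y, .bang A) :: Δ) N B →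
      (∀ z ∈ dom Γ, z ∉ dom Δ) →
      NEALT (Γ ++ Δ) (.contr N M x y) B
  | limpI {Γ x A M B} : NEALT ((x, A) :: Γ) M B → NEALT Γ (.lam x M) (.limp A B)
  | limpE {Γ Δ M N A B} :
      NEALT Γ M (.limp A B) → NEALT Δ N A →
      (∀ z ∈ dom Γ, z ∉ dom Δ) →
      NEALT (Γ ++ Δ) (.app M N) B
  | promote {Γ : List (ℕ × EALFormula)} {Δs : List (List (ℕ × EALFormula))}
      {Ms : List ETerm} {xs : List ℕ} {As : List EALFormula} {N B}
      (h1 : Δs.length = Ms.length) (h2 : Ms.length = As.length)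
      (h3 : xs.length = As.length)
      (hMs : ∀ i, i < Ms.length →
        NEALT (Δs.getD i []) (Ms.getD i (.var 0)) (.bang (As.getD i (.atom 0))))
      (hN : NEALT (xs.zip As) N B)
      (hdisj : (Γ :: Δs).Pairwise fun Δ₁ Δ₂ => ∀ z ∈ dom Δ₁, z ∉ dom Δ₂) :
      NEALT (Γ ++ Δs.flatten) (.promote N Ms xs) (.bang B)


/-- Type-valued NEAL derivations (derivation trees). -/
inductive NEALD : List (ℕ × EALFormula) → ETerm → EALFormula → Type where
  | ax {Γ x A} : (x, A) ∈ Γ → NEALD Γ (.var x) A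
  | contr {Γ Δ M N x y A B} :
      NEALD Γ M (.bang A) →
      NEALD ((x, .bang A) :: (y, .bang A) :: Δ) N B →
      (∀ z ∈ dom Γ, z ∉ dom Δ) →
      NEALD (Γ ++ Δ) (.contr N M x y) B
  | limpI {Γ x A M B} : NEALD ((x, A) :: Γ) M B → NEALD Γ (.lam x M) (.limp A B)
  | limpE {Γ Δ M N A B} :
      NEALD Γ M (.limp A B) → NEALD Δ N A →
      (∀ z ∈ dom Γ, z ∉ dom Δ) →
      NEALD (Γ ++ Δ) (.app M N) B
  | promote {Γ : List (ℕ × EALFormula)} {Δs : List (List (ℕ × EALFormula))}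
      {Ms : List ETerm} {xs : List ℕ} {As : List EALFormula} {N B}
      (h1 : Δs.length = Ms.length) (h2 : Ms.length = As.length)
      (h3 : xs.length = As.length)
      (hMs : ∀ i, i < Ms.length →
        NEALD (Δs.getD i []) (Ms.getD i (.var 0)) (.bang (As.getD i (.atom 0))))
      (hN : NEALD (xs.zip As) N B)
      (hdisj : (Γ :: Δs).Pairwise fun Δ₁ Δ₂ => ∀ z ∈ dom Δ₁, z ∉ dom Δ₂) :
      NEALD (Γ ++ Δs.flatten) (.promote N Ms xs) (.bang B)

/-- Equality of derivations up to weakening (the unused part of the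
context in axioms and in the anchor context of the promotion rule). -/
inductive DEquiv : ∀ {Γ₁ Γ₂ : List (ℕ × EALFormula)} {M : ETerm} {A : EALFormula},
    NEALD Γ₁ M A → NEALD Γ₂ M A → Prop where
  | ax {Γ₁ Γ₂ x A} (h₁ : (x, A) ∈ Γ₁) (h₂ : (x, A) ∈ Γ₂) :
      DEquiv (NEALD.ax h₁) (NEALD.ax h₂)
  | contr {Γ Δ Γ' Δ' M N x y A B}
      {d₁ : NEALD Γ M (.bang A)} {d₁' : NEALD Γ' M (.bang A)}
      {d₂ : NEALD ((x, .bang A) :: (y, .bang A) :: Δ) N B}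
      {d₂' : NEALD ((x, .bang A) :: (y, .bang A) :: Δ') N B}
      {h : ∀ z ∈ dom Γ, z ∉ dom Δ} {h' : ∀ z ∈ dom Γ', z ∉ dom Δ'} :
      DEquiv d₁ d₁' → DEquiv d₂ d₂' →
      DEquiv (NEALD.contr d₁ d₂ h) (NEALD.contr d₁' d₂' h')
  | limpI {Γ Γ' x A M B} {d : NEALD ((x, A) :: Γ) M B} {d' : NEALD ((x, A) :: Γ') M B} :
      DEquiv d d' → DEquiv (NEALD.limpI d) (NEALD.limpI d')
  | limpE {Γ Δ Γ' Δ' M N A B}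
      {d₁ : NEALD Γ M (.limp A B)} {d₁' : NEALD Γ' M (.limp A B)}
      {d₂ : NEALD Δ N A} {d₂' : NEALD Δ' N A}
      {h : ∀ z ∈ dom Γ, z ∉ dom Δ} {h' : ∀ z ∈ dom Γ', z ∉ dom Δ'} :
      DEquiv d₁ d₁' → DEquiv d₂ d₂' →
      DEquiv (NEALD.limpE d₁ d₂ h) (NEALD.limpE d₁' d₂' h')
  | promote {Γ Γ' : List (ℕ × EALFormula)} {Δs Δs' : List (List (ℕ × EALFormula))}
      {Ms : List ETerm} {xs : List ℕ} {As : List EALFormula} {N B}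
      {h1 : Δs.length = Ms.length} {h1' : Δs'.length = Ms.length}
      {h2 : Ms.length = As.length} {h3 : xs.length = As.length}
      {f : ∀ i, i < Ms.length →
        NEALD (Δs.getD i []) (Ms.getD i (.var 0)) (.bang (As.getD i (.atom 0)))}
      {f' : ∀ i, i < Ms.length →
        NEALD (Δs'.getD i []) (Ms.getD i (.var 0)) (.bang (As.getD i (.atom 0)))}
      {hN : NEALD (xs.zip As) N B} {hN' : NEALD (xs.zip As) N B}
      {hd : (Γ :: Δs).Pairwise fun Δ₁ Δ₂ => ∀ z ∈ dom Δ₁, z ∉ dom Δ₂}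
      {hd' : (Γ' :: Δs').Pairwise fun Δ₁ Δ₂ => ∀ z ∈ dom Δ₁, z ∉ dom Δ₂} :
      (∀ i (h : i < Ms.length), DEquiv (f i h) (f' i h)) →
      DEquiv hN hN' →
      DEquiv (NEALD.promote h1 h2 h3 f hN hd) (NEALD.promote h1' h2 h3 f' hN' hd')

/-- NEAL on formulas only (natural deduction for EAL, list contexts). -/
inductive NEALF : List EALFormula → EALFormula → Prop where
  | ax {Γ A} : A ∈ Γ → NEALF Γ A
  | contr {Γ Δ A B} : NEALF Γ (.bang A) → NEALF (.bang A :: .bang A :: Δ) B →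
      NEALF (Γ ++ Δ) B
  | limpI {Γ A B} : NEALF (A :: Γ) B → NEALF Γ (.limp A B)
  | limpE {Γ Δ A B} : NEALF Γ (.limp A B) → NEALF Δ A → NEALF (Γ ++ Δ) B
  | promote {Γ : List EALFormula} {Δs : List (List EALFormula)}
      {As : List EALFormula} {B}
      (h : Δs.length = As.length)
      (hp : ∀ i, i < Δs.length → NEALF (Δs.getD i []) (.bang (As.getD i (.atom 0))))
      (hB : NEALF As B) : NEALF (Γ ++ Δs.flatten) (.bang B)

/-- The EAL sequent calculus on formulas, with multiset contexts. -/
inductive EALSeq : Multiset EALFormula → EALFormula → Prop where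
  | ax {A} : EALSeq {A} A
  | cut {Γ Δ A B} : EALSeq Γ A → EALSeq (A ::ₘ Δ) B → EALSeq (Γ + Δ) B
  | weak {Γ A B} : EALSeq Γ B → EALSeq (A ::ₘ Γ) B
  | contr {Γ A B} : EALSeq (.bang A ::ₘ .bang A ::ₘ Γ) B → EALSeq (.bang A ::ₘ Γ) B
  | limpR {Γ A B} : EALSeq (A ::ₘ Γ) B → EALSeq Γ (.limp A B)
  | limpL {Γ Δ A B C} : EALSeq Γ A → EALSeq (B ::ₘ Δ) C →
      EALSeq (.limp A B ::ₘ (Γ + Δ)) C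
  | promote {Γ B} : EALSeq Γ B → EALSeq (Γ.map .bang) (.bang B)

/-- NEAL on formulas, with multiset contexts. -/
inductive NEALm : Multiset EALFormula → EALFormula → Prop where
  | ax {Γ A} : A ∈ Γ → NEALm Γ A
  | contr {Γ Δ A B} : NEALm Γ (.bang A) → NEALm (.bang A ::ₘ .bang A ::ₘ Δ) B →
      NEALm (Γ + Δ) B
  | limpI {Γ A B} : NEALm (A ::ₘ Γ) B → NEALm Γ (.limp A B)
  | limpE {Γ Δ A B} : NEALm Γ (.limp A B) → NEALm Δ A → NEALm (Γ + Δ) B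
  | promote {Γ : Multiset EALFormula} {Δs : List (Multiset EALFormula)}
      {As : List EALFormula} {B}
      (h : Δs.length = As.length)
      (hp : ∀ i, i < Δs.length → NEALm (Δs.getD i 0) (.bang (As.getD i (.atom 0))))
      (hB : NEALm (↑As) B) : NEALm (Γ + Δs.sum) (.bang B)


/-- General EAL-types: simple types decorated at every position with a
formal sum of exponential variables. -/
inductive GType where
  | atom (n : ℕ) (ns : List ℕ)
  | limp (ns : List ℕ) (A B : GType)

/-- Instantiate the exponential variables of a general EAL-type. -/
def instG (X : ℕ → ℕ) : GType → EALFormula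
  | .atom n ns => bangN ((ns.map X).sum) (.atom n)
  | .limp ns A B => bangN ((ns.map X).sum) (.limp (instG X A) (instG X B))

/-- Erasure of a general EAL-type to a simple type. -/
def gerase : GType → SimpleType
  | .atom n _ => .tvar n
  | .limp _ A B => .arrow (gerase A) (gerase B)

/-- The processing function `P`, threaded with a fresh-variable counter:
it puts one fresh exponential variable at every position of a simple type. -/
def proc : SimpleType → ℕ → GType × ℕ
  | .tvar n, k => (.atom n [k], k + 1)
  | .arrow σ τ, k =>
      let r₁ := proc σ (k + 1)
      let r₂ := proc τ r₁.2
      (.limp [k] r₁.1 r₂.1, r₂.2)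

/-- Prefix a general EAL-type with one more exponential variable. -/
def GType.bangVar (c : ℕ) : GType → GType
  | .atom n ns => .atom n (c :: ns)
  | .limp ns A B => .limp (c :: ns) A B

/-- The exponential variables occurring in a general EAL-type. -/
def GType.vars : GType → List ℕ
  | .atom _ ns => ns
  | .limp ns A B => ns ++ A.vars ++ B.vars

/-- A linear constraint `Σ pos − Σ neg = 0`. -/
structure LinCon where
  pos : List ℕ
  neg : List ℕ

/-- Satisfaction of a linear constraint by an assignment. -/
def LinCon.sat (X : ℕ → ℕ) (c : LinCon) : Prop :=
  (c.pos.map X).sum = (c.neg.map X).sum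

/-- A slice (combination of critical points): the indices of the constraints
it modifies and the free-variable occurrences it marks. -/
structure Slice where
  cons : List ℕ
  vars : List ℕ

/-- The boxing function `ℬ`: for each slice it introduces a fresh box variable
`c`, subtracts `c` from the constraints in the slice, and prefixes `!^c` to the
result type and to the basis variables not in the slice. -/
def boxAux : List (ℕ × GType) → GType → List Slice → List LinCon → ℕ →
    List (ℕ × GType) × GType × List LinCon
  | B, Γ, [], A, _ => (B, Γ, A)
  | B, Γ, sl :: cpts, A, c =>
      boxAux (B.map fun p => (p.1, if p.1 ∈ sl.vars then p.2 else p.2.bangVar c))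
        (Γ.bangVar c) cpts
        (A.mapIdx fun j con => if j ∈ sl.cons then ⟨con.pos, c :: con.neg⟩ else con)
        (c + 1)

/-- The boxing function `𝔹`: applies `ℬ` and then adds `b` boxes (a fresh
variable `b = c₀`) around the whole term. -/
def boxFun (B : List (ℕ × GType)) (Γ : GType) (cpts : List Slice) (A : List LinCon)
    (c₀ : ℕ) : List (ℕ × GType) × GType × List LinCon :=
  let r := boxAux B Γ cpts A (c₀ + 1)
  (r.1.map fun p => (p.1, p.2.bangVar c₀), r.2.1.bangVar c₀, r.2.2)



/-- Substitution of simple types for type variables. -/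
def SimpleType.substT (S : ℕ → SimpleType) : SimpleType → SimpleType
  | .tvar n => S n
  | .arrow a b => .arrow (a.substT S) (b.substT S)

/-- `σ` is the principal type schema of `M`. -/
def Principal (M : Lam) (σ : SimpleType) : Prop :=
  SimplyTyped [] M σ ∧ ∀ τ, SimplyTyped [] M τ → ∃ S, τ = σ.substT S

/-- Candidate elementary affine terms: legal, in non-β normal form, simple
(contracting only variables and with `L(P) = L(P*)`), with both contracted
variables free in every contraction body, and with non-variable promotion
bodies. -/
def Candidate (P : ETerm) : Prop :=
  Legal P ∧
  (∀ r S S', r ≠ RuleName.beta → Subterm S P → ¬ Step r S S') ∧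
  (∀ N Q x y, Subterm (.contr N Q x y) P → ∃ v, eraseT Q = Lam.var v) ∧
  Lterm P = Llam (eraseT P) ∧
  (∀ N Q x y, Subterm (.contr N Q x y) P → x ∈ FV N ∧ y ∈ FV N) ∧
  (∀ N Ms xs, Subterm (.promote N Ms xs) P → ∀ v, N ≠ .var v)

/-- `M` has an EAL type whose erasure is the simple type `τ`
(i.e. `Γ ⊢_EAL M : C`, with contraction used only on variables,
via the main theorem on candidate terms). -/
def EALTypableAt (M : Lam) (τ : SimpleType) : Prop :=
  ∃ (P : ETerm) (Γ : List (ℕ × EALFormula)) (C : EALFormula),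
    Candidate P ∧ NEALT Γ P C ∧ eraseT P = M ∧ eraseF C = τ


theorem EALSeq.weakN {Γ : Multiset EALFormula} {B} (h : EALSeq Γ B) :
    ∀ Δ, EALSeq (Δ + Γ) B := by
  intro Δ
  induction Δ using Multiset.induction with
  | empty => simpa using h
  | cons a Δ ih => rw [Multiset.cons_add]; exact .weak ih

theorem EALSeq.axMem {Γ : Multiset EALFormula} {A} (h : A ∈ Γ) : EALSeq Γ A := by
  have h2 := EALSeq.weakN (EALSeq.ax (A := A)) (Γ.erase A)
  have : Γ.erase A + {A} = Γ := by
    rw [add_comm, Multiset.singleton_add, Multiset.cons_erase h]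
  rwa [this] at h2

theorem cutList : ∀ (Δs : List (Multiset EALFormula)) (As : List EALFormula)
    (Θ : Multiset EALFormula) (C : EALFormula),
    Δs.length = As.length →
    (∀ i, i < Δs.length → EALSeq (Δs.getD i 0) (.bang (As.getD i (.atom 0)))) →
    EALSeq (↑(As.map EALFormula.bang) + Θ) C → EALSeq (Δs.sum + Θ) C
  | [], [], Θ, C, _, _, h => by simpa using h
  | Δ :: Δs, A :: As, Θ, C, hl, hp, h => by
    have h0 : EALSeq Δ (.bang A) := by simpa using hp 0 (by simp)
    have h1 : EALSeq (.bang A ::ₘ (↑(As.map EALFormula.bang) + Θ)) C := by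
      rw [← Multiset.cons_add, Multiset.cons_coe]; simpa using h
    have h2 := EALSeq.cut h0 h1
    have h3 := cutList Δs As (Θ + Δ) C (by simpa using hl)
      (fun i hi => by simpa using hp (i+1) (by simpa using Nat.succ_lt_succ hi))
      (by rw [show (↑(As.map EALFormula.bang) : Multiset EALFormula) + (Θ + Δ)
              = Δ + (↑(As.map EALFormula.bang) + Θ) by abel]; exact h2)
    rw [show (Δ :: Δs).sum + Θ = Δs.sum + (Θ + Δ) by simp; abel]
    exact h3

theorem NEALm.weak1 {Γ : Multiset EALFormula} {B} (h : NEALm Γ B) (A : EALFormula) :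
    NEALm (A ::ₘ Γ) B := by
  induction h with
  | ax hm => exact .ax (Multiset.mem_cons_of_mem hm)
  | contr h1 h2 ih1 _ => rw [← Multiset.cons_add]; exact .contr ih1 h2
  | limpI h ih => exact .limpI (Multiset.cons_swap _ _ _ ▸ ih)
  | limpE h1 h2 ih1 _ => rw [← Multiset.cons_add]; exact .limpE ih1 h2
  | promote hl hp hB _ _ => rw [← Multiset.cons_add]; exact .promote hl hp hB

theorem sum_singletons (l : List EALFormula) :
    (l.map fun A => ({EALFormula.bang A} : Multiset EALFormula)).sum
      = ↑(l.map EALFormula.bang) := by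
  induction l with
  | nil => simp
  | cons a l ih => simp [ih, ← Multiset.cons_coe, ← Multiset.singleton_add]

theorem seq_to_nealm {Γ : Multiset EALFormula} {A} (h : EALSeq Γ A) : NEALm Γ A := by
  induction h with
  | ax => exact .ax (by simp)
  | cut h1 h2 ih1 ih2 =>
    rw [add_comm]; exact .limpE (.limpI ih2) ih1
  | weak h ih => exact ih.weak1 _
  | @contr Γ A B h ih =>
    have := NEALm.contr (Γ := {.bang A}) (.ax (by simp)) ih
    rwa [Multiset.singleton_add] at this
  | limpR h ih => exact .limpI ih
  | @limpL Γ Δ A B C h1 h2 ih1 ih2 =>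
    have d1 : NEALm ({EALFormula.limp A B} + Γ) B :=
      .limpE (.ax (by simp)) ih1
    have d3 := NEALm.limpE (.limpI ih2) d1
    rw [show (EALFormula.limp A B ::ₘ (Γ + Δ))
        = Δ + ({EALFormula.limp A B} + Γ) by
      rw [← Multiset.singleton_add]; abel]
    exact d3
  | @promote Γ B h ih =>
    have hG : (↑Γ.toList : Multiset EALFormula) = Γ := Multiset.coe_toList Γ
    have d := NEALm.promote (Γ := 0)
      (Δs := Γ.toList.map fun A => ({EALFormula.bang A} : Multiset EALFormula))
      (As := Γ.toList) (B := B) (by simp)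
      (fun i hi => by
        simp only [List.length_map] at hi
        rw [List.getD_eq_getElem _ _ (by simpa using hi),
            List.getD_eq_getElem _ _ hi]
        simp only [List.getElem_map]
        exact .ax (by simp))
      (by rwa [hG])
    rw [zero_add, sum_singletons] at d
    have : (↑(Γ.toList.map EALFormula.bang) : Multiset EALFormula)
        = Γ.map EALFormula.bang := by
      rw [← Multiset.map_coe, hG]
    rwa [this] at d

theorem nealm_to_seq {Γ : Multiset EALFormula} {A} (h : NEALm Γ A) : EALSeq Γ A := by
  induction h with
  | ax hm => exact .axMem hm
  | contr h1 h2 ih1 ih2 => exact .cut ih1 (EALSeq.contr ih2)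
  | limpI h ih => exact .limpR ih
  | @limpE Γ Δ A B h1 h2 ih1 ih2 =>
    have d1 : EALSeq (B ::ₘ 0) B := EALSeq.axMem (by simp)
    have d2 := EALSeq.limpL ih2 d1
    have d3 := EALSeq.cut ih1 d2
    simpa using d3
  | @promote Γ Δs As B hl hp hB ihp ihB =>
    have d : EALSeq (↑(As.map EALFormula.bang) + 0) (.bang B) := by
      have := EALSeq.promote ihB
      rwa [Multiset.map_coe, add_zero] at *
    have d2 := cutList Δs As 0 (.bang B) hl ihp d
    have d3 := EALSeq.weakN d2 Γ
    simpa using d3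

/-- equivalence of the sequent calculus and natural deduction
presentations of Elementary Affine Logic. -/
theorem eal_iff_neal : ∀ (Γ : Multiset EALFormula) (A : EALFormula),
    EALSeq Γ A ↔ NEALm Γ A := by
  intro Γ A
  exact ⟨seq_to_nealm, nealm_to_seq⟩
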